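/- arXiv:2211.16583 — 2 statements merged into one kernel-verified Lean document; each statement's English description precedes it below -/
import Mathlib

section
/- There exists a pair of confounded MDPs that are observationally indistinguishable under their respective behavior policies yet have evaluation-policy values differing by exactly 2εH. Concretely, let ε ∈ [0, 1/2] and z₁, z₂ ∈ [0,1], and define two confounded MDPs M₁, M₂ on S = {1,2}, U = {1,2}, A = {1,2} with state-independent transitions: P₁(u=1) = 1/2 − ε, P₁(u=2) = 1/2 + ε; P₂(u=1) = 1/2 + ε, P₂(u=2) = 1/2 − ε; for both MDPs T_i(s'=1 | u=1, a=1) = 0 and T_i(s'=1 | u=2, a=1) = 1; T₁(s'=1 | u=1, a=2) = z₁, T₁(s'=1 | u=2, a=2) = z₂, T₂(s'=1 | u=1, a=2) = z₂, T₂(s'=1 | u=2, a=2) = z₁; behavior policies π_{b1}(a=1 | s, u=1) = 1/2 + ε, π_{b1}(a=1 | s, u=2) = 1/2 − ε, π_{b2}(a=1 | s, u=1) = 1/2 − ε, π_{b2}(a=1 | s, u=2) = 1/2 + ε. Then: (a) for all s, a, s' ∈ {1,2}, Σ_u P₁(u)·π_{b1}(a|s,u)·T₁(s'|u,a) = Σ_u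 P₂(u)·π_{b2}(a|s,u)·T₂(s'|u,a), i.e. the observed joint data distributions agree; and (b) setting p_i := Σ_u P_i(u)·T_i(s'=1 | u, a=1), one has p₁ − p₂ = 2ε, and hence for the evaluation policy π_e(a=1|s) = 1 the H-step values V_1^{π_e}(M_i) = H·p_i (defined by V_{H+1} = 0, V_h = p_i·(r(1) + V_{h+1}(1)) + (1−p_i)·(r(2) + V_{h+1}(2)) with r(1)=1, r(2)=0) satisfy V_1^{π_e}(M₁) − V_1^{π_e}(M₂) = 2εH. -/
open Finset

noncomputable section

/-- Confounder distribution of MDP `M₁`: `P₁(u=1) = 1/2 − ε`, `P₁(u=2) = 1/2 + ε`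
(confounder `u=1` is index `0`, `u=2` is index `1`). -/
def Pconf1 (ε : ℝ) (u : Fin 2) : ℝ := if u = 0 then 1 / 2 - ε else 1 / 2 + ε

/-- Confounder distribution of MDP `M₂`: `P₂(u=1) = 1/2 + ε`, `P₂(u=2) = 1/2 − ε`. -/
def Pconf2 (ε : ℝ) (u : Fin 2) : ℝ := if u = 0 then 1 / 2 + ε else 1 / 2 - ε

/-- Probability that the next state is `s₁` (index `0`) in MDP `M₁`, given confounder `u`
and action `a` (action `a=1` is index `0`, `a=2` is index `1`); state-independent. -/
def T1 (z₁ z₂ : ℝ) (u a : Fin 2) : ℝ :=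
  if a = 0 then (if u = 0 then 0 else 1) else (if u = 0 then z₁ else z₂)

/-- Probability that the next state is `s₁` (index `0`) in MDP `M₂`. -/
def T2 (z₁ z₂ : ℝ) (u a : Fin 2) : ℝ :=
  if a = 0 then (if u = 0 then 0 else 1) else (if u = 0 then z₂ else z₁)

/-- The full next-state distribution, given the probability `t` of moving to state `s₁`. -/
def ker (t : ℝ) (s' : Fin 2) : ℝ := if s' = 0 then t else 1 - t

/-- Behavior policy in `M₁`: `π_{b1}(a=1|s,u=1) = 1/2 + ε`, `π_{b1}(a=1|s,u=2) = 1/2 − ε`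
(state-independent). -/
def pib1 (ε : ℝ) (a u : Fin 2) : ℝ :=
  if a = 0 then (if u = 0 then 1 / 2 + ε else 1 / 2 - ε)
  else (if u = 0 then 1 / 2 - ε else 1 / 2 + ε)

/-- Behavior policy in `M₂`: `π_{b2}(a=1|s,u=1) = 1/2 − ε`, `π_{b2}(a=1|s,u=2) = 1/2 + ε`. -/
def pib2 (ε : ℝ) (a u : Fin 2) : ℝ :=
  if a = 0 then (if u = 0 then 1 / 2 - ε else 1 / 2 + ε)
  else (if u = 0 then 1 / 2 + ε else 1 / 2 - ε)

/-- `H`-step value recursion under the evaluation policy `π_e(a=1|s) = 1`: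
`V_{H+1} = 0` and `V_h = p·(r(1) + V_{h+1}(1)) + (1−p)·(r(2) + V_{h+1}(2))`
with `r(1) = 1`, `r(2) = 0`, where `p` is the (state-independent) probability of
transitioning to state `s₁` under `a = 1`. -/
def Vrec (p : ℝ) : ℕ → ℝ
  | 0 => 0
  | (n + 1) => p * (1 + Vrec p n) + (1 - p) * (0 + Vrec p n)

theorem Vrec_eq_mul (p : ℝ) (n : ℕ) : Vrec p n = n * p := by
  induction n with
  | zero => simp [Vrec]
  | succ n ih => rw [Vrec, ih]; push_cast; ring

theorem Vrec_sub_Vrec (p q : ℝ) (n : ℕ) : Vrec p n - Vrec q n = n * (p - q) := by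
  rw [Vrec_eq_mul, Vrec_eq_mul]; ring

section ObservationalEquivalence

variable (ε z₁ z₂ : ℝ) (u : Fin 2)

theorem Pconf1_mul_pib1_zero : Pconf1 ε u * pib1 ε 0 u = Pconf2 ε u * pib2 ε 0 u := by
  fin_cases u <;>
    simp only [Pconf1, Pconf2, pib1, pib2, Fin.zero_eta, Fin.mk_one, Fin.isValue, one_ne_zero,
      ↓reduceIte] <;>
    ring

theorem T1_zero : T1 z₁ z₂ u 0 = T2 z₁ z₂ u 0 := by
  simp [T1, T2]

theorem Pconf1_mul_pib1_one :
    Pconf1 ε u * pib1 ε 1 u = Pconf2 ε u.rev * pib2 ε 1 u.rev := by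
  fin_cases u <;> simp [Pconf1, Pconf2, pib1, pib2]

theorem T1_one : T1 z₁ z₂ u 1 = T2 z₁ z₂ u.rev 1 := by
  fin_cases u <;> simp [T1, T2]

/-- Under action `a=1` the confounded weights `P(u)·π_b(a|u)` and the transitions coincide,
while under action `a=2` the two models differ only by relabelling the confounder. -/
theorem observed_distribution_eq (a s' : Fin 2) :
    ∑ u : Fin 2, Pconf1 ε u * pib1 ε a u * ker (T1 z₁ z₂ u a) s' =
      ∑ u : Fin 2, Pconf2 ε u * pib2 ε a u * ker (T2 z₁ z₂ u a) s' := by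
  fin_cases a
  · refine Finset.sum_congr rfl fun u _ => ?_
    simp only [Fin.zero_eta, Pconf1_mul_pib1_zero, T1_zero]
  · refine Fintype.sum_equiv Fin.revPerm _ _ fun u => ?_
    simp only [Fin.mk_one, Pconf1_mul_pib1_one, T1_one, Fin.revPerm_apply]

end ObservationalEquivalence

theorem sum_Pconf1_mul_T1_zero_sub_sum_Pconf2_mul_T2_zero (ε z₁ z₂ : ℝ) :
    (∑ u : Fin 2, Pconf1 ε u * T1 z₁ z₂ u 0) - ∑ u : Fin 2, Pconf2 ε u * T2 z₁ z₂ u 0 =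
      2 * ε := by
  simp only [Fin.sum_univ_two, Pconf1, Pconf2, T1, T2, Fin.isValue, one_ne_zero, ↓reduceIte]
  ring

theorem confounded_mdp_indistinguishable_value_gap_general
    (ε z₁ z₂ : ℝ) (H : ℕ) :
    -- (a) the observed joint data distributions agree for all (s, a, s')
    (∀ _s a s' : Fin 2,
      ∑ u : Fin 2, Pconf1 ε u * pib1 ε a u * ker (T1 z₁ z₂ u a) s' =
      ∑ u : Fin 2, Pconf2 ε u * pib2 ε a u * ker (T2 z₁ z₂ u a) s') ∧
    -- (b) the marginalized probabilities p_i of reaching s₁ under a = 1 differ by 2ε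
    ((∑ u : Fin 2, Pconf1 ε u * T1 z₁ z₂ u 0) -
      (∑ u : Fin 2, Pconf2 ε u * T2 z₁ z₂ u 0) = 2 * ε) ∧
    -- the H-step values are H·p_i
    (Vrec (∑ u : Fin 2, Pconf1 ε u * T1 z₁ z₂ u 0) H =
      H * ∑ u : Fin 2, Pconf1 ε u * T1 z₁ z₂ u 0) ∧
    (Vrec (∑ u : Fin 2, Pconf2 ε u * T2 z₁ z₂ u 0) H =
      H * ∑ u : Fin 2, Pconf2 ε u * T2 z₁ z₂ u 0) ∧
    -- and they differ by exactly 2εH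
    (Vrec (∑ u : Fin 2, Pconf1 ε u * T1 z₁ z₂ u 0) H -
      Vrec (∑ u : Fin 2, Pconf2 ε u * T2 z₁ z₂ u 0) H = 2 * ε * H) := by
  have hgap := sum_Pconf1_mul_T1_zero_sub_sum_Pconf2_mul_T2_zero ε z₁ z₂
  refine ⟨fun _ => observed_distribution_eq ε z₁ z₂, hgap, Vrec_eq_mul _ H, Vrec_eq_mul _ H, ?_⟩
  rw [Vrec_sub_Vrec, hgap, mul_comm]

/-- Two observationally indistinguishable confounded MDPs whose evaluation-policy
values differ by exactly `2εH`. -/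
theorem confounded_mdp_indistinguishable_value_gap
    (ε z₁ z₂ : ℝ) (hε0 : 0 ≤ ε) (hε : ε ≤ 1 / 2)
    (hz₁0 : 0 ≤ z₁) (hz₁1 : z₁ ≤ 1) (hz₂0 : 0 ≤ z₂) (hz₂1 : z₂ ≤ 1)
    (H : ℕ) (hH : 1 ≤ H) :
    -- (a) the observed joint data distributions agree for all (s, a, s')
    (∀ _s a s' : Fin 2,
      ∑ u : Fin 2, Pconf1 ε u * pib1 ε a u * ker (T1 z₁ z₂ u a) s' =
      ∑ u : Fin 2, Pconf2 ε u * pib2 ε a u * ker (T2 z₁ z₂ u a) s') ∧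
    -- (b) the marginalized probabilities p_i of reaching s₁ under a = 1 differ by 2ε
    ((∑ u : Fin 2, Pconf1 ε u * T1 z₁ z₂ u 0) -
      (∑ u : Fin 2, Pconf2 ε u * T2 z₁ z₂ u 0) = 2 * ε) ∧
    -- the H-step values are H·p_i
    (Vrec (∑ u : Fin 2, Pconf1 ε u * T1 z₁ z₂ u 0) H =
      H * ∑ u : Fin 2, Pconf1 ε u * T1 z₁ z₂ u 0) ∧
    (Vrec (∑ u : Fin 2, Pconf2 ε u * T2 z₁ z₂ u 0) H =
      H * ∑ u : Fin 2, Pconf2 ε u * T2 z₁ z₂ u 0) ∧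
    -- and they differ by exactly 2εH
    (Vrec (∑ u : Fin 2, Pconf1 ε u * T1 z₁ z₂ u 0) H -
      Vrec (∑ u : Fin 2, Pconf2 ε u * T2 z₁ z₂ u 0) H = 2 * ε * H) :=
  confounded_mdp_indistinguishable_value_gap_general ε z₁ z₂ H
end
end

section
/- Convergence of gradient descent with bounded gradient bias: let E be a real inner product space and f : E → ℝ differentiable with M-Lipschitz gradient (M > 0), bounded below with infimum f*. Let 0 < η < 1/(4M) and ε ≥ 0. Suppose iterates θ₁, θ₂, … satisfy θ_{t+1} = θ_t − η(∇f(θ_t) + B_t) with ‖B_t‖ ≤ ε for every t. Then for every T ≥ 1: (1/T)·Σ_{t=1}^{T} ‖∇f(θ_t)‖² ≤ (4/(ηT))·(f(θ₁) − f*) + 3ε². -/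
open Finset

lemma descent_lemma {E : Type*} [NormedAddCommGroup E]
    [InnerProductSpace ℝ E] [CompleteSpace E]
    (f : E → ℝ) (M : ℝ)
    (hdiff : ∀ x, DifferentiableAt ℝ f x)
    (hLip : ∀ x y, ‖gradient f x - gradient f y‖ ≤ M * ‖x - y‖)
    (x v : E) :
    f (x + v) ≤ f x + inner ℝ (gradient f x) v + M / 2 * ‖v‖ ^ 2 := by
  set φ : ℝ → ℝ := fun t => f (x + t • v) - t * inner ℝ (gradient f x) v
      - M * ‖v‖ ^ 2 * t ^ 2 / 2 with hφ
  have hder : ∀ t : ℝ, HasDerivAt φ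
      ((inner ℝ (gradient f (x + t • v)) v : ℝ) - inner ℝ (gradient f x) v
        - M * ‖v‖ ^ 2 * t) t := by
    intro t
    have hc : HasDerivAt (fun t : ℝ => x + t • v) v t := by
      simpa using ((hasDerivAt_id t).smul_const v).const_add x
    have hg := ((hdiff (x + t • v)).hasGradientAt).hasFDerivAt
    have h1 : HasDerivAt (fun t : ℝ => f (x + t • v))
        ((inner ℝ (gradient f (x + t • v)) v : ℝ)) t := by
      exact hg.comp_hasDerivAt t hc
    have h2 : HasDerivAt (fun t : ℝ => t * (inner ℝ (gradient f x) v : ℝ))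
        (inner ℝ (gradient f x) v) t := by
      simpa using (hasDerivAt_id t).mul_const (inner ℝ (gradient f x) v : ℝ)
    have h3 : HasDerivAt (fun t : ℝ => M * ‖v‖ ^ 2 * t ^ 2 / 2)
        (M * ‖v‖ ^ 2 * t) t := by
      have := ((hasDerivAt_pow 2 t).const_mul (M * ‖v‖ ^ 2)).div_const 2
      exact this.congr_deriv (by push_cast; ring)
    exact (h1.sub h2).sub h3
  have hanti : AntitoneOn φ (Set.Icc 0 1) := by
    apply antitoneOn_of_deriv_nonpos (convex_Icc 0 1)
    · exact (fun t _ => (hder t).continuousAt.continuousWithinAt)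
    · intro t ht
      exact ((hder t).differentiableAt).differentiableWithinAt
    · intro t ht
      rw [interior_Icc] at ht
      rw [(hder t).deriv]
      have h1 : (inner ℝ (gradient f (x + t • v)) v : ℝ) - inner ℝ (gradient f x) v
          = inner ℝ (gradient f (x + t • v) - gradient f x) v := by
        rw [inner_sub_left]
      have h2 : (inner ℝ (gradient f (x + t • v) - gradient f x) v : ℝ)
          ≤ M * ‖v‖ ^ 2 * t := by
        calc (inner ℝ (gradient f (x + t • v) - gradient f x) v : ℝ)
            ≤ ‖gradient f (x + t • v) - gradient f x‖ * ‖v‖ :=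
              real_inner_le_norm _ _
          _ ≤ M * ‖x + t • v - x‖ * ‖v‖ := by
              have := hLip (x + t • v) x
              nlinarith [norm_nonneg v]
          _ = M * ‖v‖ ^ 2 * t := by
              rw [show x + t • v - x = t • v by abel, norm_smul]
              simp [abs_of_pos ht.1]
              ring
      linarith [h1 ▸ h2]
  have := hanti (Set.mem_Icc.2 ⟨le_refl 0, zero_le_one⟩)
    (Set.mem_Icc.2 ⟨zero_le_one, le_refl 1⟩) zero_le_one
  simp only [hφ, zero_smul, add_zero, one_smul, zero_mul, sub_zero, one_pow, mul_one,
    zero_pow] at this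
  linarith

/-- Convergence of gradient descent with bounded gradient bias: if `f` has an
`M`-Lipschitz gradient, infimum `f*`, `0 < η < 1/(4M)`, the iterates satisfy
`θ_{t+1} = θ_t − η(∇f(θ_t) + B_t)` with `‖B_t‖ ≤ ε`, then for every `T ≥ 1`,
`(1/T)·Σ_{t=1}^T ‖∇f(θ_t)‖² ≤ (4/(ηT))·(f(θ₁) − f*) + 3ε²`. -/
theorem biased_gradient_descent_convergence {E : Type*} [NormedAddCommGroup E]
    [InnerProductSpace ℝ E] [CompleteSpace E]
    (f : E → ℝ) (M : ℝ) (hM : 0 < M)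
    (hdiff : ∀ x, DifferentiableAt ℝ f x)
    (hLip : ∀ x y, ‖gradient f x - gradient f y‖ ≤ M * ‖x - y‖)
    (fstar : ℝ) (hfstar : IsGLB (Set.range f) fstar)
    (η : ℝ) (hη0 : 0 < η) (hη : η < 1 / (4 * M))
    (ε : ℝ) (hε : 0 ≤ ε) (θ B : ℕ → E)
    (hstep : ∀ t, θ (t + 1) = θ t - η • (gradient f (θ t) + B t))
    (hB : ∀ t, ‖B t‖ ≤ ε) (T : ℕ) (hT : 1 ≤ T) :
    (1 / T) * ∑ t ∈ Finset.Icc 1 T, ‖gradient f (θ t)‖ ^ 2 ≤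
      (4 / (η * T)) * (f (θ 1) - fstar) + 3 * ε ^ 2 := by
  have hMη : M * η ≤ 1 / 4 := by
    rw [lt_div_iff₀ (by positivity)] at hη
    nlinarith
  -- per-step inequality
  have hstep' : ∀ t, η / 4 * ‖gradient f (θ t)‖ ^ 2 ≤
      f (θ t) - f (θ (t + 1)) + 3 * η / 4 * ε ^ 2 := by
    intro t
    set g := gradient f (θ t) with hg
    set b := B t with hb
    clear_value g b
    have h1 : θ (t + 1) = θ t + (-(η • (g + b))) := by
      rw [hstep t, ← hg, ← hb]; abel
    have h2 := descent_lemma f M hdiff hLip (θ t) (-(η • (g + b)))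
    rw [← h1, ← hg] at h2
    have h3 : (inner ℝ g (-(η • (g + b))) : ℝ)
        = -η * (‖g‖ ^ 2 + inner ℝ g b) := by
      rw [inner_neg_right, real_inner_smul_right, inner_add_right,
        real_inner_self_eq_norm_sq]
      ring
    have h4 : ‖-(η • (g + b))‖ ^ 2 = η ^ 2 * ‖g + b‖ ^ 2 := by
      rw [norm_neg, norm_smul]
      simp [abs_of_pos hη0]
      ring
    rw [h3, h4] at h2
    have h5 : (inner ℝ g b : ℝ) ≥ -(‖g‖ * ε) := by
      have h6 : ‖b‖ ≤ ε := hb ▸ hB t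
      have h7 := abs_real_inner_le_norm g b
      have h8 := neg_abs_le (inner ℝ g b : ℝ)
      nlinarith [norm_nonneg g, norm_nonneg b]
    have h7 : ‖g + b‖ ^ 2 ≤ 2 * ‖g‖ ^ 2 + 2 * ε ^ 2 := by
      have h9 := norm_add_le g b
      have h6 : ‖b‖ ≤ ε := hb ▸ hB t
      nlinarith [norm_nonneg g, norm_nonneg b, norm_nonneg (g + b),
        sq_nonneg (‖g‖ - ‖b‖)]
    have h8 : ‖g‖ * ε ≤ ‖g‖ ^ 2 / 2 + ε ^ 2 / 2 := by
      nlinarith [sq_nonneg (‖g‖ - ε)]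
    have hη2 : M / 2 * η ^ 2 ≤ η / 8 := by nlinarith
    have e0 : -(inner ℝ g b : ℝ) ≤ ‖g‖ ^ 2 / 2 + ε ^ 2 / 2 := by linarith
    have e1 : η * (-(inner ℝ g b : ℝ)) ≤ η * (‖g‖ ^ 2 / 2 + ε ^ 2 / 2) :=
      mul_le_mul_of_nonneg_left e0 hη0.le
    have e2 : M / 2 * (η ^ 2 * ‖g + b‖ ^ 2) ≤ η / 8 * (2 * ‖g‖ ^ 2 + 2 * ε ^ 2) := by
      calc M / 2 * (η ^ 2 * ‖g + b‖ ^ 2) = (M / 2 * η ^ 2) * ‖g + b‖ ^ 2 := by ring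
        _ ≤ η / 8 * ‖g + b‖ ^ 2 := mul_le_mul_of_nonneg_right hη2 (sq_nonneg _)
        _ ≤ η / 8 * (2 * ‖g‖ ^ 2 + 2 * ε ^ 2) :=
            mul_le_mul_of_nonneg_left h7 (by positivity)
    linarith [e1, e2, h2]
  -- telescoping
  have htel : ∑ t ∈ Finset.Icc 1 T, (f (θ t) - f (θ (t + 1)))
      = f (θ 1) - f (θ (T + 1)) := by
    have hI : Finset.Icc 1 T = Finset.Ico 1 (T + 1) := by
      rw [Finset.Ico_add_one_right_eq_Icc]
    rw [hI, Finset.sum_Ico_eq_sum_range]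
    simp only [Nat.add_sub_cancel]
    have := Finset.sum_range_sub' (fun i => f (θ (i + 1))) T
    simpa [add_comm] using this
  have hsum : η / 4 * ∑ t ∈ Finset.Icc 1 T, ‖gradient f (θ t)‖ ^ 2
      ≤ f (θ 1) - f (θ (T + 1)) + 3 * η / 4 * ε ^ 2 * T := by
    rw [Finset.mul_sum]
    calc ∑ t ∈ Finset.Icc 1 T, η / 4 * ‖gradient f (θ t)‖ ^ 2
        ≤ ∑ t ∈ Finset.Icc 1 T, (f (θ t) - f (θ (t + 1)) + 3 * η / 4 * ε ^ 2) :=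
          Finset.sum_le_sum (fun t _ => hstep' t)
      _ = f (θ 1) - f (θ (T + 1)) + 3 * η / 4 * ε ^ 2 * T := by
          rw [Finset.sum_add_distrib, htel, Finset.sum_const, Nat.card_Icc,
            Nat.add_sub_cancel, nsmul_eq_mul]
          ring
  have hlb : fstar ≤ f (θ (T + 1)) := hfstar.1 ⟨θ (T + 1), rfl⟩
  have hT0 : (0 : ℝ) < T := by exact_mod_cast Nat.lt_of_lt_of_le Nat.zero_lt_one hT
  have hS : η / 4 * ∑ t ∈ Finset.Icc 1 T, ‖gradient f (θ t)‖ ^ 2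
      ≤ (f (θ 1) - fstar) + 3 * η / 4 * ε ^ 2 * T := by linarith
  rw [div_mul_eq_mul_div, div_mul_eq_mul_div, one_mul, div_add' _ _ _ (by positivity),
    div_le_div_iff₀ hT0 (by positivity)]
  have hSnn : (0:ℝ) ≤ ∑ t ∈ Finset.Icc 1 T, ‖gradient f (θ t)‖ ^ 2 :=
    Finset.sum_nonneg (fun t _ => sq_nonneg _)
  nlinarith [mul_pos hη0 hT0]
end
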